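/- arXiv:1510.03817 — 4 statements merged into one kernel-verified Lean document; each statement's English description precedes it below -/
import Mathlib

section
/- (Optimal exponent under the Morse–Bott/Lyapunov–Schmidt condition.) In Setting (B), with K, Π, Φ as above, suppose there are open neighborhoods U₀ ⊆ U of x∞ and V₀ ⊆ X̃ of 0 and a C¹ map Ψ : V₀ → U₀ with Φ(Ψ(α)) = α for all α ∈ V₀ and Ψ(Φ(x)) = x for all x ∈ U₀, such that the Lyapunov–Schmidt reduction α ↦ E(Ψ(α)) is constant, equal to E(x∞), on a neighborhood of 0 in K ∩ V₀ (this is the condition satisfied when E is Morse–Bott at x∞). Then there exist an open neighborhood W₀ ⊆ U of x∞ and a constant C ∈ [1,∞) such that |E(x) − E(x∞)| ≤ C · ‖M(x)‖²_{X̃} for all x ∈ W₀; that is, the Łojasiewicz–Simon gradient inequality holds with the optimal exponent θ = 1/2. -/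
/-!
Write `Q = ε ∘ Pt` for the projection of `X̃` onto `K` and `g = E ∘ Ψ`, whose derivative at `β`
is `ζ (M (Ψ β)) ∘ Ψ'(β)`. From `Φ ∘ Ψ = id`, `M ∘ Ψ = id - Q ∘ ε ∘ (Ψ - x∞)`, which is Lipschitz
near `0` and maps the slice `K` into `K`.

Slice points are critical: for small `k ∈ K`, `M (Ψ k) = m ∈ K`, and as `g` is constant on the
slice, `ζ m (Ψ'(k) m) = 0`. But `Ψ'(0) m = m`, `Ψ'` is continuous, and `m ↦ ζ m m` is definite,
hence coercive, on the finite-dimensional `K`; so `m = 0`.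

Consequently `‖g'(β)‖ ≤ C ‖β - Q α‖` on the segment from `Q α` to `α`, and the mean value
theorem gives `|g α - g (Q α)| ≤ C ‖α - Q α‖²`, where `g (Q α) = E x∞`. For `α = Φ x` this reads
`|E x - E x∞| ≤ C ‖M x - Q (M x)‖²`.
-/

open Function Set

noncomputable section

/-- A continuous linear operator between real normed spaces is Fredholm of index zero. -/
def FredholmIndexZero {X Y : Type*} [NormedAddCommGroup X] [NormedSpace ℝ X]
    [NormedAddCommGroup Y] [NormedSpace ℝ Y] (T : X →L[ℝ] Y) : Prop :=
  FiniteDimensional ℝ (LinearMap.ker (T : X →ₗ[ℝ] Y)) ∧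
    IsClosed (LinearMap.range (T : X →ₗ[ℝ] Y) : Set Y) ∧
    FiniteDimensional ℝ (Y ⧸ LinearMap.range (T : X →ₗ[ℝ] Y)) ∧
    Module.finrank ℝ (LinearMap.ker (T : X →ₗ[ℝ] Y)) = Module.finrank ℝ (Y ⧸ LinearMap.range (T : X →ₗ[ℝ] Y))

open Metric Filter Topology

section

variable {X F G : Type*} [NormedAddCommGroup X] [NormedSpace ℝ X]
  [NormedAddCommGroup F] [NormedSpace ℝ F] [NormedAddCommGroup G] [NormedSpace ℝ G]

theorem exists_pos_mul_norm_sq_le_abs_apply_self (B : X →L[ℝ] X →L[ℝ] ℝ) (K : Submodule ℝ X)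
    [FiniteDimensional ℝ K] (hB : ∀ m ∈ K, m ≠ 0 → B m m ≠ 0) :
    ∃ c > 0, ∀ m ∈ K, c * ‖m‖ ^ 2 ≤ |B m m| := by
  obtain ⟨c, hc, hsphere⟩ := (isCompact_sphere (0 : K) 1).exists_forall_le'
    (f := fun m : K => |B m m|) (by fun_prop) (a := 0) fun m hm =>
      abs_pos.2 (hB m m.2 fun h => by
        rw [mem_sphere_zero_iff_norm, Submodule.coe_norm, h, norm_zero] at hm
        exact zero_ne_one hm)
  refine ⟨c, hc, fun m hm => ?_⟩
  rcases eq_or_ne m 0 with rfl | hm0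
  · simp
  have hnorm : 0 < ‖m‖ := norm_pos_iff.2 hm0
  have hu := hsphere (‖m‖⁻¹ • ⟨m, hm⟩) (by simp [norm_smul, hnorm.ne'])
  simp only [Submodule.coe_smul, map_smul, smul_apply, smul_eq_mul,
    abs_mul, abs_inv, abs_norm] at hu
  calc c * ‖m‖ ^ 2 ≤ (‖m‖⁻¹ * (‖m‖⁻¹ * |B m m|)) * ‖m‖ ^ 2 := by gcongr
    _ = |B m m| := by field_simp

theorem eq_zero_of_apply_eq_zero_of_norm_sub_le (B : X →L[ℝ] X →L[ℝ] ℝ) {c κ : ℝ} {m v : X}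
    (hc : c * ‖m‖ ^ 2 ≤ |B m m|) (hκ : ‖B‖ * κ < c) (hv : B m v = 0)
    (hmv : ‖m - v‖ ≤ κ * ‖m‖) : m = 0 := by
  have : c * ‖m‖ ^ 2 ≤ ‖B‖ * κ * ‖m‖ ^ 2 :=
    calc c * ‖m‖ ^ 2 ≤ |B m (m - v)| := by rwa [map_sub, hv, sub_zero]
      _ ≤ ‖B‖ * ‖m‖ * ‖m - v‖ := B.le_opNorm₂ m (m - v)
      _ ≤ ‖B‖ * ‖m‖ * (κ * ‖m‖) := by gcongr
      _ = ‖B‖ * κ * ‖m‖ ^ 2 := by ring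
  have : ‖m‖ ^ 2 ≤ 0 := by nlinarith
  simpa using this

theorem HasFDerivAt.comp_eq_id_of_leftInverse {f : F → G} {g : G → F} {f' : F →L[ℝ] G}
    {g' : G →L[ℝ] F} {x : F} (hf : HasFDerivAt f f' x) (hg : HasFDerivAt g g' (f x))
    (hgf : ∀ᶠ y in 𝓝 x, g (f y) = y) : g'.comp f' = ContinuousLinearMap.id ℝ F :=
  (hg.comp x hf).unique ((hasFDerivAt_id x).congr_of_eventuallyEq hgf)

theorem HasFDerivAt.apply_eq_zero_of_eventually_eq {f : F → G} {f' : F →L[ℝ] G} {a : F}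
    (hf : HasFDerivAt f f' a) (S : Submodule ℝ F) (hconst : ∀ᶠ y in 𝓝 a, y - a ∈ S → f y = f a)
    {v : F} (hv : v ∈ S) : f' v = 0 := by
  have hline : HasDerivAt (fun t : ℝ => f (a + t • v)) (f' v) 0 := by
    have hℓ : HasDerivAt (fun t : ℝ => a + t • v) v 0 := by
      simpa using ((hasDerivAt_id (0 : ℝ)).smul_const v).const_add a
    exact hf.comp_hasDerivAt_of_eq 0 hℓ (by simp)
  have hev : (fun t : ℝ => f (a + t • v)) =ᶠ[𝓝 0] fun _ => f a := by
    have : Tendsto (fun t : ℝ => a + t • v) (𝓝 0) (𝓝 a) :=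
      Continuous.tendsto' (by fun_prop) 0 a (by simp)
    filter_upwards [this.eventually hconst] with t ht
    exact ht (by simpa using S.smul_mem t hv)
  exact hline.unique ((hasDerivAt_const 0 (f a)).congr_of_eventuallyEq hev)

theorem Convex.norm_image_sub_le_mul_norm_sub_sq {g : F → G} {g' : F → F →L[ℝ] G} {s : Set F}
    (hs : Convex ℝ s) (hg : ∀ β ∈ s, HasFDerivAt g (g' β) β) {a b : F} (ha : a ∈ s) (hb : b ∈ s)
    {C : ℝ} (hC : 0 ≤ C) (hbound : ∀ β ∈ s, ‖g' β‖ ≤ C * ‖β - a‖) :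
    ‖g b - g a‖ ≤ C * ‖b - a‖ ^ 2 := by
  have hseg := hs.segment_subset ha hb
  have := (convex_segment a b).norm_image_sub_le_of_norm_hasFDerivWithin_le
    (fun β hβ => (hg β (hseg hβ)).hasFDerivWithinAt)
    (fun β hβ => (hbound β (hseg hβ)).trans (mul_le_mul_of_nonneg_left
      (norm_sub_le_of_mem_segment hβ) hC))
    (left_mem_segment ℝ a b) (right_mem_segment ℝ a b)
  rwa [sq, ← mul_assoc]

end

section

variable {X Xt : Type*} [NormedAddCommGroup X] [NormedSpace ℝ X]
  [NormedAddCommGroup Xt] [NormedSpace ℝ Xt]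
  {ε : X →L[ℝ] Xt} {ζ : Xt →L[ℝ] StrongDual ℝ X} {Pt : Xt →L[ℝ] X} {K : Submodule ℝ X}
  {E : X → ℝ} {M : X → Xt} {Ψ : Xt → X} {x₀ : X} {U : Set X}

theorem projection_apply_embedding_of_mem {Pd : StrongDual ℝ X →L[ℝ] StrongDual ℝ X}
    (hζ : Injective ζ) (hPd_idem : Pd.comp Pd = Pd)
    (hPd_range : LinearMap.range (Pd : StrongDual ℝ X →ₗ[ℝ] StrongDual ℝ X)
      = K.map (ζ.comp ε : X →ₗ[ℝ] StrongDual ℝ X))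
    (hPt_compat : ∀ y : Xt, ζ (ε (Pt y)) = Pd (ζ y)) {k : X} (hk : k ∈ K) :
    ε (Pt (ε k)) = ε k := by
  obtain ⟨w, hw⟩ : ζ (ε k) ∈ LinearMap.range (Pd : StrongDual ℝ X →ₗ[ℝ] StrongDual ℝ X) :=
    hPd_range ▸ Submodule.mem_map_of_mem hk
  apply hζ
  rw [hPt_compat, ← hw]
  exact congr($hPd_idem w)

theorem fderiv_apply_embedding_of_leftInverse {A : X →L[ℝ] Xt} (hM : HasFDerivAt M A x₀)
    (hMx₀ : M x₀ = 0) {m : X} (hm : A m = 0) (hεm : ε (Pt (ε m)) = ε m)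
    (hΨ : DifferentiableAt ℝ Ψ 0)
    (hΨΦ : ∀ᶠ x in 𝓝 x₀, Ψ (M x + ε (Pt (ε (x - x₀)))) = x) :
    fderiv ℝ Ψ 0 (ε m) = m := by
  have hΦ : HasFDerivAt (fun x => M x + ε (Pt (ε (x - x₀)))) (A + ε.comp (Pt.comp ε)) x₀ :=
    hM.add ((ε.comp (Pt.comp ε)).hasFDerivAt.comp x₀ ((hasFDerivAt_id x₀).sub_const x₀))
  have hΦx₀ : M x₀ + ε (Pt (ε (x₀ - x₀))) = 0 := by simp [hMx₀]
  have hid := hΦ.comp_eq_id_of_leftInverse (g' := fderiv ℝ Ψ 0) (hΦx₀ ▸ hΨ.hasFDerivAt) hΨΦ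
  simpa [hm, hεm] using congr($hid m)

theorem norm_sub_le_of_rightInverse {s : Set Xt} (hs : Convex ℝ s)
    (hΨ : ∀ β ∈ s, DifferentiableAt ℝ Ψ β)
    (hΦΨ : ∀ α ∈ s, M (Ψ α) + ε (Pt (ε (Ψ α - x₀))) = α)
    {L : ℝ} (hL : ∀ β ∈ s, ‖fderiv ℝ Ψ β‖ ≤ L) {β γ : Xt} (hβ : β ∈ s) (hγ : γ ∈ s) :
    ‖M (Ψ β) - M (Ψ γ)‖ ≤ (1 + ‖ε.comp Pt‖ * ‖ε‖ * L) * ‖β - γ‖ := by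
  have hΨLip : ‖Ψ β - Ψ γ‖ ≤ L * ‖β - γ‖ := hs.norm_image_sub_le_of_norm_fderiv_le hΨ hL hγ hβ
  have hdiff : M (Ψ β) - M (Ψ γ) = (β - γ) - (ε.comp Pt) (ε (Ψ β - Ψ γ)) := by
    rw [eq_sub_of_add_eq (hΦΨ β hβ), eq_sub_of_add_eq (hΦΨ γ hγ)]
    simp only [ContinuousLinearMap.comp_apply, map_sub]
    abel
  calc ‖M (Ψ β) - M (Ψ γ)‖ ≤ ‖β - γ‖ + ‖ε.comp Pt‖ * (‖ε‖ * ‖Ψ β - Ψ γ‖) := by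
        rw [hdiff]
        refine (norm_sub_le _ _).trans ?_
        gcongr
        exact ((ε.comp Pt).le_opNorm _).trans (by gcongr; exact ε.le_opNorm _)
    _ ≤ ‖β - γ‖ + ‖ε.comp Pt‖ * (‖ε‖ * (L * ‖β - γ‖)) := by gcongr
    _ = (1 + ‖ε.comp Pt‖ * ‖ε‖ * L) * ‖β - γ‖ := by ring

theorem abs_sub_le_mul_norm_sub_sq_of_critical {s : Set Xt} (hs : Convex ℝ s)
    (hEgrad : ∀ y ∈ U, HasFDerivAt E (ζ (M y)) y) (hΨ : ∀ β ∈ s, DifferentiableAt ℝ Ψ β)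
    (hΨU : MapsTo Ψ s U) (hΦΨ : ∀ α ∈ s, M (Ψ α) + ε (Pt (ε (Ψ α - x₀))) = α)
    {L : ℝ} (hL : ∀ β ∈ s, ‖fderiv ℝ Ψ β‖ ≤ L) {α γ : Xt} (hα : α ∈ s) (hγ : γ ∈ s)
    (hcrit : M (Ψ γ) = 0) :
    |E (Ψ α) - E (Ψ γ)| ≤ ‖ζ‖ * (1 + ‖ε.comp Pt‖ * ‖ε‖ * L) * L * ‖α - γ‖ ^ 2 := by
  have hL0 : 0 ≤ L := (norm_nonneg _).trans (hL γ hγ)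
  rw [← Real.norm_eq_abs]
  refine hs.norm_image_sub_le_mul_norm_sub_sq (g := E ∘ Ψ)
    (fun β hβ => (hEgrad _ (hΨU hβ)).comp β (hΨ β hβ).hasFDerivAt) hγ hα (by positivity)
    fun β hβ => ?_
  have hMβ := norm_sub_le_of_rightInverse hs hΨ hΦΨ hL hβ hγ
  rw [hcrit, sub_zero] at hMβ
  calc ‖(ζ (M (Ψ β))).comp (fderiv ℝ Ψ β)‖ ≤ ‖ζ‖ * ‖M (Ψ β)‖ * L :=
        (ContinuousLinearMap.opNorm_comp_le _ _).trans
          (mul_le_mul (ζ.le_opNorm _) (hL β hβ) (norm_nonneg _) (by positivity))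
    _ ≤ ‖ζ‖ * ((1 + ‖ε.comp Pt‖ * ‖ε‖ * L) * ‖β - γ‖) * L := by gcongr
    _ = ‖ζ‖ * (1 + ‖ε.comp Pt‖ * ‖ε‖ * L) * L * ‖β - γ‖ := by ring

theorem apply_eq_zero_of_mem_slice {s : Set Xt} (hs : IsOpen s)
    (hEgrad : ∀ y ∈ U, HasFDerivAt E (ζ (M y)) y) (hΨ : ∀ β ∈ s, DifferentiableAt ℝ Ψ β)
    (hΨU : MapsTo Ψ s U) (hΦΨ : ∀ α ∈ s, M (Ψ α) + ε (Pt (ε (Ψ α - x₀))) = α)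
    (hPtK : ∀ y, Pt y ∈ K) (hconst : ∀ α ∈ s, (∃ k ∈ K, ε k = α) → E (Ψ α) = E x₀)
    {c δ : ℝ} (hc : ∀ m ∈ K, c * ‖m‖ ^ 2 ≤ |ζ (ε m) m|) (hδ : ‖ζ.comp ε‖ * (‖ε‖ * δ) < c)
    {D₀ : Xt →L[ℝ] X} (hD₀ : ∀ m ∈ K, D₀ (ε m) = m) (hclose : ∀ β ∈ s, ‖fderiv ℝ Ψ β - D₀‖ ≤ δ)
    {k : X} (hk : k ∈ K) (hks : ε k ∈ s) :
    M (Ψ (ε k)) = 0 := by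
  set m := k - Pt (ε (Ψ (ε k) - x₀))
  have hmK : m ∈ K := K.sub_mem hk (hPtK _)
  have hMm : M (Ψ (ε k)) = ε m := by
    rw [map_sub]
    exact eq_sub_of_add_eq (hΦΨ _ hks)
  have hv : ζ (ε m) (fderiv ℝ Ψ (ε k) (ε m)) = 0 := by
    have hEΨ := (hEgrad _ (hΨU hks)).comp (ε k) (hΨ _ hks).hasFDerivAt
    have := hEΨ.apply_eq_zero_of_eventually_eq (K.map (ε : X →ₗ[ℝ] Xt)) ?_
      (Submodule.mem_map_of_mem hmK)
    · rwa [hMm] at this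
    filter_upwards [hs.mem_nhds hks] with y hy ⟨k', hk', hy'⟩
    have hyk : ε (k + k') = y := by rw [map_add]; exact eq_sub_iff_add_eq'.mp hy'
    simp only [comp_apply, hconst y hy ⟨_, K.add_mem hk hk', hyk⟩, hconst _ hks ⟨k, hk, rfl⟩]
  have hm0 : m = 0 := by
    refine eq_zero_of_apply_eq_zero_of_norm_sub_le (ζ.comp ε) (hc m hmK) hδ hv ?_
    calc ‖m - fderiv ℝ Ψ (ε k) (ε m)‖ = ‖(D₀ - fderiv ℝ Ψ (ε k)) (ε m)‖ := by
          rw [sub_apply, hD₀ m hmK]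
      _ ≤ ‖D₀ - fderiv ℝ Ψ (ε k)‖ * ‖ε m‖ := (D₀ - fderiv ℝ Ψ (ε k)).le_opNorm _
      _ ≤ δ * (‖ε‖ * ‖m‖) := by
          rw [norm_sub_rev]
          exact mul_le_mul (hclose _ hks) (ε.le_opNorm m) (norm_nonneg _)
            ((norm_nonneg _).trans (hclose _ hks))
      _ = ‖ε‖ * δ * ‖m‖ := by ring
  rw [hMm, hm0, map_zero]

theorem exists_abs_sub_le_mul_norm_sub_projection_sq [FiniteDimensional ℝ K]
    (hdef : ∀ m ∈ K, m ≠ 0 → ζ (ε m) m ≠ 0) (hEgrad : ∀ y ∈ U, HasFDerivAt E (ζ (M y)) y)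
    {V₀ : Set Xt} (hV₀ : IsOpen V₀) (h0V₀ : (0 : Xt) ∈ V₀) (hΨ : ContDiffOn ℝ 1 Ψ V₀)
    (hΨU : MapsTo Ψ V₀ U) (hΦΨ : ∀ α ∈ V₀, M (Ψ α) + ε (Pt (ε (Ψ α - x₀))) = α)
    (hPtK : ∀ y, Pt y ∈ K) (hD₀ : ∀ m ∈ K, fderiv ℝ Ψ 0 (ε m) = m)
    (hconst : ∀ᶠ α in 𝓝 0, (∃ k ∈ K, ε k = α) → E (Ψ α) = E x₀) :
    ∃ r > 0, ∃ C, 0 ≤ C ∧ ∀ α ∈ ball (0 : Xt) r, ε (Pt α) ∈ ball (0 : Xt) r →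
      |E (Ψ α) - E x₀| ≤ C * ‖α - ε (Pt α)‖ ^ 2 := by
  obtain ⟨c, hc, hcoer⟩ := exists_pos_mul_norm_sq_le_abs_apply_self (ζ.comp ε) K hdef
  obtain ⟨δ, hδ, hδc⟩ := exists_pos_mul_lt hc (‖ζ.comp ε‖ * ‖ε‖)
  have hΨ' : ContinuousAt (fderiv ℝ Ψ) 0 :=
    (hΨ.continuousOn_fderiv_of_isOpen hV₀ le_rfl).continuousAt (hV₀.mem_nhds h0V₀)
  obtain ⟨r, hr, hball⟩ := eventually_nhds_iff_ball.1 <| hconst.and <|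
    (hV₀.eventually_mem h0V₀).and (hΨ'.eventually (closedBall_mem_nhds _ hδ))
  have hrV : ball 0 r ⊆ V₀ := fun β hβ => (hball β hβ).2.1
  have hΨd : ∀ β ∈ ball (0 : Xt) r, DifferentiableAt ℝ Ψ β := fun β hβ =>
    (hΨ.differentiableOn one_ne_zero).differentiableAt (hV₀.mem_nhds (hrV hβ))
  have hclose : ∀ β ∈ ball (0 : Xt) r, ‖fderiv ℝ Ψ β - fderiv ℝ Ψ 0‖ ≤ δ := fun β hβ => by
    simpa [dist_eq_norm] using (hball β hβ).2.2
  have hcrit : ∀ k ∈ K, ε k ∈ ball (0 : Xt) r → M (Ψ (ε k)) = 0 :=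
    fun k hk hkr => apply_eq_zero_of_mem_slice isOpen_ball hEgrad hΨd (hΨU.mono_left hrV)
      (fun α hα => hΦΨ α (hrV hα)) hPtK (fun α hα => (hball α hα).1) hcoer
      (by rwa [← mul_assoc]) hD₀ hclose hk hkr
  set L := ‖fderiv ℝ Ψ 0‖ + δ
  refine ⟨r, hr, ‖ζ‖ * (1 + ‖ε.comp Pt‖ * ‖ε‖ * L) * L, by positivity, fun α hα hQα => ?_⟩
  rw [← (hball _ hQα).1 ⟨Pt α, hPtK α, rfl⟩]
  exact abs_sub_le_mul_norm_sub_sq_of_critical (convex_ball 0 r) hEgrad hΨd (hΨU.mono_left hrV)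
    (fun α hα => hΦΨ α (hrV hα))
    (fun β hβ => (norm_le_norm_add_norm_sub' _ (fderiv ℝ Ψ 0)).trans (by linarith [hclose β hβ]))
    hα hQα (hcrit _ (hPtK α) hQα)

theorem exists_isOpen_abs_sub_le_mul_norm_sq {U₀ : Set X} (hU₀ : IsOpen U₀) (hx₀ : x₀ ∈ U₀)
    (hM : ContinuousOn M U₀) (hMx₀ : M x₀ = 0)
    (hΨΦ : ∀ x ∈ U₀, Ψ (M x + ε (Pt (ε (x - x₀)))) = x)
    (hQ : ∀ y, ε (Pt (ε (Pt y))) = ε (Pt y)) {r C : ℝ} (hr : 0 < r) (hC : 0 ≤ C)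
    (hest : ∀ α ∈ ball (0 : Xt) r, ε (Pt α) ∈ ball (0 : Xt) r →
      |E (Ψ α) - E x₀| ≤ C * ‖α - ε (Pt α)‖ ^ 2) :
    ∃ W₀ ⊆ U₀, IsOpen W₀ ∧ x₀ ∈ W₀ ∧
      ∀ x ∈ W₀, |E x - E x₀| ≤ C * (1 + ‖ε.comp Pt‖) ^ 2 * ‖M x‖ ^ 2 := by
  set Q := ε.comp Pt
  set Φ : X → Xt := fun x => M x + Q (ε (x - x₀))
  have hΦ : ContinuousOn Φ U₀ := hM.add (by fun_prop)
  refine ⟨U₀ ∩ Φ ⁻¹' (ball 0 r ∩ Q ⁻¹' ball 0 r), inter_subset_left,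
    hΦ.isOpen_inter_preimage hU₀ (isOpen_ball.inter (isOpen_ball.preimage Q.continuous)),
    ⟨hx₀, by simp [Φ, hMx₀, hr]⟩, ?_⟩
  rintro x ⟨hxU₀, hΦr, hQΦr⟩
  have hsub : Φ x - Q (Φ x) = M x - Q (M x) := by
    simp only [Φ, map_add, Q, ContinuousLinearMap.comp_apply, hQ]
    abel
  calc |E x - E x₀| = |E (Ψ (Φ x)) - E x₀| := by rw [show Ψ (Φ x) = x from hΨΦ x hxU₀]
    _ ≤ C * ‖M x - Q (M x)‖ ^ 2 := hsub ▸ hest _ hΦr hQΦr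
    _ ≤ C * ((1 + ‖Q‖) * ‖M x‖) ^ 2 := by
        gcongr
        exact (norm_sub_le _ _).trans (by linarith [Q.le_opNorm (M x)])
    _ = C * (1 + ‖Q‖) ^ 2 * ‖M x‖ ^ 2 := by ring

end

theorem optimal_lojasiewicz_simon_morse_bott_general
    {X Xt : Type*} [NormedAddCommGroup X] [NormedSpace ℝ X]
    [NormedAddCommGroup Xt] [NormedSpace ℝ Xt]
    -- Setting (B)
    (ε : X →L[ℝ] Xt)
    (ζ : Xt →L[ℝ] StrongDual ℝ X) (hζ : Function.Injective ζ)
    (hdef : ∀ x : X, x ≠ 0 → ζ (ε x) x ≠ 0)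
    (U : Set X) (hU : IsOpen U)
    (E : X → ℝ) (hE : ContDiffOn ℝ 2 E U)
    (M : X → Xt) (hMC1 : ContDiffOn ℝ 1 M U)
    (hgrad : ∀ x ∈ U, ∀ v : X, fderiv ℝ E x v = ζ (M x) v)
    (x_inf : X) (hx : x_inf ∈ U) (hMcrit : M x_inf = 0)
    (hFred : FredholmIndexZero (fderiv ℝ M x_inf))
    -- K = ker M'(x_inf); Π : X* → X* a continuous projection with range j(K),
    -- inducing Pt : X̃ → X (composition with ε gives the induced projections on X and X̃).
    (Pd : StrongDual ℝ X →L[ℝ] StrongDual ℝ X)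
    (hPd_idem : Pd.comp Pd = Pd)
    (hPd_range : LinearMap.range (Pd : StrongDual ℝ X →ₗ[ℝ] StrongDual ℝ X)
      = Submodule.map (ζ.comp ε : X →ₗ[ℝ] StrongDual ℝ X) (LinearMap.ker (fderiv ℝ M x_inf : X →ₗ[ℝ] Xt)))
    (Pt : Xt →L[ℝ] X)
    (hPt_mem : ∀ y : Xt, Pt y ∈ LinearMap.ker (fderiv ℝ M x_inf : X →ₗ[ℝ] Xt))
    (hPt_compat : ∀ y : Xt, ζ (ε (Pt y)) = Pd (ζ y))
    -- local C¹ inverse Ψ of Φ, Φ x = M x + Π (x - x_inf)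
    (U₀ : Set X) (hU₀ : IsOpen U₀) (hxU₀ : x_inf ∈ U₀) (hU₀U : U₀ ⊆ U)
    (V₀ : Set Xt) (hV₀ : IsOpen V₀) (h0V₀ : (0 : Xt) ∈ V₀)
    (Ψ : Xt → X) (hΨC1 : ContDiffOn ℝ 1 Ψ V₀) (hΨmap : MapsTo Ψ V₀ U₀)
    (hΦΨ : ∀ α ∈ V₀, M (Ψ α) + ε (Pt (ε (Ψ α - x_inf))) = α)
    (hΨΦ : ∀ x ∈ U₀, Ψ (M x + ε (Pt (ε (x - x_inf)))) = x)
    -- the Lyapunov–Schmidt reduction is constant on a neighborhood of 0 in K ∩ V₀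
    (W : Set Xt) (hW : IsOpen W) (h0W : (0 : Xt) ∈ W)
    (hconst : ∀ α ∈ W ∩ V₀,
      (∃ k ∈ LinearMap.ker (fderiv ℝ M x_inf : X →ₗ[ℝ] Xt), ε k = α) → E (Ψ α) = E x_inf) :
    ∃ (W₀ : Set X) (C : ℝ), IsOpen W₀ ∧ x_inf ∈ W₀ ∧ W₀ ⊆ U ∧ 1 ≤ C ∧
      ∀ x ∈ W₀, |E x - E x_inf| ≤ C * ‖M x‖ ^ 2 := by
  have := hFred.1
  have hεPtε : ∀ k ∈ LinearMap.ker (fderiv ℝ M x_inf : X →ₗ[ℝ] Xt), ε (Pt (ε k)) = ε k :=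
    fun k => projection_apply_embedding_of_mem hζ hPd_idem hPd_range hPt_compat
  have hEgrad : ∀ y ∈ U, HasFDerivAt E (ζ (M y)) y := fun y hy =>
    ((hE.differentiableOn two_ne_zero).differentiableAt (hU.mem_nhds hy)).hasFDerivAt.congr_fderiv
      (ContinuousLinearMap.ext (hgrad y hy))
  have hD₀ : ∀ m ∈ LinearMap.ker (fderiv ℝ M x_inf : X →ₗ[ℝ] Xt), fderiv ℝ Ψ 0 (ε m) = m :=
    fun m hm => fderiv_apply_embedding_of_leftInverse
      ((hMC1.differentiableOn one_ne_zero).differentiableAt (hU.mem_nhds hx)).hasFDerivAt hMcrit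
      hm (hεPtε m hm) ((hΨC1.differentiableOn one_ne_zero).differentiableAt (hV₀.mem_nhds h0V₀))
      (eventually_of_mem (hU₀.mem_nhds hxU₀) hΨΦ)
  obtain ⟨r, hr, C, hC, hest⟩ := exists_abs_sub_le_mul_norm_sub_projection_sq
    (fun m _ => hdef m) hEgrad hV₀ h0V₀ hΨC1 (hΨmap.mono_right hU₀U) hΦΨ hPt_mem hD₀
    (eventually_of_mem ((hW.inter hV₀).mem_nhds ⟨h0W, h0V₀⟩) hconst)
  obtain ⟨W₀, hW₀U₀, hW₀, hxW₀, hW₀est⟩ := exists_isOpen_abs_sub_le_mul_norm_sq hU₀ hxU₀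
    (hMC1.continuousOn.mono hU₀U) hMcrit hΨΦ (fun y => hεPtε _ (hPt_mem y)) hr hC hest
  refine ⟨W₀, max 1 (C * (1 + ‖ε.comp Pt‖) ^ 2), hW₀, hxW₀, hW₀U₀.trans hU₀U, le_max_left _ _,
    fun x hx => (hW₀est x hx).trans ?_⟩
  gcongr
  exact le_max_right _ _

/-- Optimal exponent θ = 1/2 under the Morse–Bott/Lyapunov–Schmidt condition (Setting (B)):
if the Lyapunov–Schmidt reduction `α ↦ E (Ψ α)` is constant, equal to `E x_inf`, on a
neighborhood of `0` in `K ∩ V₀`, then `|E x - E x_inf| ≤ C ‖M x‖²` near `x_inf`. -/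
theorem optimal_lojasiewicz_simon_morse_bott
    {X Xt : Type*} [NormedAddCommGroup X] [NormedSpace ℝ X] [CompleteSpace X]
    [NormedAddCommGroup Xt] [NormedSpace ℝ Xt] [CompleteSpace Xt]
    -- Setting (B)
    (ε : X →L[ℝ] Xt) (hε : Function.Injective ε)
    (ζ : Xt →L[ℝ] StrongDual ℝ X) (hζ : Function.Injective ζ)
    (hdef : ∀ x : X, x ≠ 0 → ζ (ε x) x ≠ 0)
    (U : Set X) (hU : IsOpen U)
    (E : X → ℝ) (hE : ContDiffOn ℝ 2 E U)
    (M : X → Xt) (hMC1 : ContDiffOn ℝ 1 M U)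
    (hgrad : ∀ x ∈ U, ∀ v : X, fderiv ℝ E x v = ζ (M x) v)
    (x_inf : X) (hx : x_inf ∈ U) (hMcrit : M x_inf = 0)
    (hFred : FredholmIndexZero (fderiv ℝ M x_inf))
    -- K = ker M'(x_inf); Π : X* → X* a continuous projection with range j(K),
    -- inducing Pt : X̃ → X (composition with ε gives the induced projections on X and X̃).
    (Pd : StrongDual ℝ X →L[ℝ] StrongDual ℝ X)
    (hPd_idem : Pd.comp Pd = Pd)
    (hPd_range : LinearMap.range (Pd : StrongDual ℝ X →ₗ[ℝ] StrongDual ℝ X)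
      = Submodule.map (ζ.comp ε : X →ₗ[ℝ] StrongDual ℝ X) (LinearMap.ker (fderiv ℝ M x_inf : X →ₗ[ℝ] Xt)))
    (Pt : Xt →L[ℝ] X)
    (hPt_mem : ∀ y : Xt, Pt y ∈ LinearMap.ker (fderiv ℝ M x_inf : X →ₗ[ℝ] Xt))
    (hPt_compat : ∀ y : Xt, ζ (ε (Pt y)) = Pd (ζ y))
    -- local C¹ inverse Ψ of Φ, Φ x = M x + Π (x - x_inf)
    (U₀ : Set X) (hU₀ : IsOpen U₀) (hxU₀ : x_inf ∈ U₀) (hU₀U : U₀ ⊆ U)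
    (V₀ : Set Xt) (hV₀ : IsOpen V₀) (h0V₀ : (0 : Xt) ∈ V₀)
    (Ψ : Xt → X) (hΨC1 : ContDiffOn ℝ 1 Ψ V₀) (hΨmap : MapsTo Ψ V₀ U₀)
    (hΦΨ : ∀ α ∈ V₀, M (Ψ α) + ε (Pt (ε (Ψ α - x_inf))) = α)
    (hΨΦ : ∀ x ∈ U₀, Ψ (M x + ε (Pt (ε (x - x_inf)))) = x)
    -- the Lyapunov–Schmidt reduction is constant on a neighborhood of 0 in K ∩ V₀
    (W : Set Xt) (hW : IsOpen W) (h0W : (0 : Xt) ∈ W)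
    (hconst : ∀ α ∈ W ∩ V₀,
      (∃ k ∈ LinearMap.ker (fderiv ℝ M x_inf : X →ₗ[ℝ] Xt), ε k = α) → E (Ψ α) = E x_inf) :
    ∃ (W₀ : Set X) (C : ℝ), IsOpen W₀ ∧ x_inf ∈ W₀ ∧ W₀ ⊆ U ∧ 1 ≤ C ∧
      ∀ x ∈ W₀, |E x - E x_inf| ≤ C * ‖M x‖ ^ 2 :=
  optimal_lojasiewicz_simon_morse_bott_general ε ζ hζ hdef U hU E hE M hMC1 hgrad x_inf hx hMcrit
    hFred Pd hPd_idem hPd_range Pt hPt_mem hPt_compat U₀ hU₀ hxU₀ hU₀U V₀ hV₀ h0V₀ Ψ hΨC1 hΨmap hΦΨ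
    hΨΦ W hW h0W hconst
end
end

section
/- (Invertibility of the projectively perturbed Hessian operator.) Let X and X̃ be Banach spaces with continuous linear embeddings ε : X → X̃ and ζ : X̃ → X* such that j := ζ ∘ ε is a definite embedding. Let T : X → X̃ be a continuous linear operator that is Fredholm of index zero and symmetric with respect to the duality pairing, i.e. (ζ(T x))(y) = (ζ(T y))(x) for all x, y ∈ X. Let K := ker T and let P : X → X be a continuous linear projection (P ∘ P = P) with range K. Then the continuous linear operator X → X̃ given by x ↦ T x + ε(P x) is bijective, hence a Banach space isomorphism. -/
open Function Set

noncomputable section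

/-!
Write `⟪y, x⟫ := ζ y x`. For `k ∈ ker T` with `ε k = T x`, symmetry gives
`⟪ε k, k⟫ = ⟪T x, k⟫ = ⟪T k, x⟫ = 0`, so `k = 0` by definiteness: `k ↦ [ε k]` embeds `ker T`
into `Y ⧸ range T`, hence is onto, the two having the same finite dimension, i.e.
`Y = range T + ε (ker T)`; and `T x + ε k` is the image of `x - P x + k`.
If `T x + ε (P x) = 0`, then `ε (P x) ∈ range T` with `P x ∈ ker T`, so `P x = 0`, then
`T x = 0` and `x = P x = 0`.
-/

namespace LinearMap

open Submodule

section Pairing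

variable {R X Y : Type*} [CommSemiring R] [AddCommMonoid X] [Module R X]
  [AddCommMonoid Y] [Module R Y]

theorem disjoint_ker_comap_range_of_symm_of_definite (B : Y →ₗ[R] X →ₗ[R] R)
    (ε T : X →ₗ[R] Y) (hdef : ∀ x, x ≠ 0 → B (ε x) x ≠ 0)
    (hsym : ∀ x y, B (T x) y = B (T y) x) :
    Disjoint (ker T) ((range T).comap ε) := by
  rw [disjoint_def]
  rintro k (hk : T k = 0) ⟨x, hx⟩
  by_contra hk0
  apply hdef k hk0
  calc B (ε k) k = B (T x) k := by rw [hx]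
    _ = B (T k) x := hsym x k
    _ = 0 := by rw [hk, map_zero, zero_apply]

end Pairing

section Perturbation

variable {K X Y : Type*} [Field K] [AddCommGroup X] [Module K X] [AddCommGroup Y] [Module K Y]
  {ε T : X →ₗ[K] Y} {P : X →ₗ[K] X}

theorem sup_range_map_ker_eq_top_of_finrank_eq [FiniteDimensional K (ker T)]
    [FiniteDimensional K (Y ⧸ range T)] (hdisj : Disjoint (ker T) ((range T).comap ε))
    (hrank : Module.finrank K (ker T) = Module.finrank K (Y ⧸ range T)) :
    range T ⊔ (ker T).map ε = ⊤ := by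
  set f := (range T).mkQ ∘ₗ ε ∘ₗ (ker T).subtype
  have hf_inj : Injective f := by
    rw [← ker_eq_bot, eq_bot_iff]
    intro k hk
    have hk' : (k : X) ∈ (range T).comap ε := (Quotient.mk_eq_zero (range T)).mp hk
    simpa using disjoint_def.mp hdisj k k.2 hk'
  have hf_range : range f = ⊤ :=
    range_eq_top.mpr ((injective_iff_surjective_of_finrank_eq_finrank hrank).mp hf_inj)
  rw [← map_mkQ_eq_top, ← hf_range, range_comp, range_comp, range_subtype]

theorem injective_add_comp_of_isProj (hP : IsProj (ker T) P)
    (hdisj : Disjoint (ker T) ((range T).comap ε)) : Injective (T + ε ∘ₗ P) := by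
  rw [← ker_eq_bot, eq_bot_iff]
  intro x (hx : T x + ε (P x) = 0)
  have hεPx : ε (P x) ∈ range T := ⟨-x, by rw [map_neg, neg_eq_of_add_eq_zero_right hx]⟩
  have hPx : P x = 0 := disjoint_def.mp hdisj _ (hP.map_mem x) hεPx
  have hTx : T x = 0 := by rwa [hPx, map_zero, add_zero] at hx
  rw [mem_bot, ← hP.map_id x hTx, hPx]

theorem surjective_add_comp_of_isProj (hP : IsProj (ker T) P)
    (hsup : range T ⊔ (ker T).map ε = ⊤) : Surjective (T + ε ∘ₗ P) := by
  intro y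
  obtain ⟨_, ⟨x, rfl⟩, _, ⟨k, hk, rfl⟩, rfl⟩ := mem_sup.mp (hsup ▸ mem_top : y ∈ _)
  refine ⟨x - P x + k, ?_⟩
  have hTPx : T (P x) = 0 := hP.map_mem x
  have hPPx : P (P x) = P x := hP.map_id _ (hP.map_mem x)
  simp only [add_apply, comp_apply, map_add, map_sub, hTPx, hPPx, hP.map_id k hk,
    mem_ker.mp hk]
  abel

end Perturbation

end LinearMap

theorem perturbed_hessian_operator_bijective_general
    {X Xt : Type*} [NormedAddCommGroup X] [NormedSpace ℝ X]
    [NormedAddCommGroup Xt] [NormedSpace ℝ Xt]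
    (ε : X →L[ℝ] Xt)
    (ζ : Xt →L[ℝ] StrongDual ℝ X)
    (hdef : ∀ x : X, x ≠ 0 → ζ (ε x) x ≠ 0)
    (T : X →L[ℝ] Xt) (hT : FredholmIndexZero T)
    (hsym : ∀ x y : X, ζ (T x) y = ζ (T y) x)
    (P : X →L[ℝ] X) (hP_idem : P.comp P = P)
    (hP_range : LinearMap.range (P : X →ₗ[ℝ] X) = LinearMap.ker (T : X →ₗ[ℝ] Xt)) :
    Function.Bijective (fun x : X => T x + ε (P x)) := by
  obtain ⟨_, -, _, hrank⟩ := hT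
  have hP_idem' : IsIdempotentElem (P : X →ₗ[ℝ] X) :=
    congrArg ContinuousLinearMap.toLinearMap hP_idem
  have hP : LinearMap.IsProj (LinearMap.ker (T : X →ₗ[ℝ] Xt)) (P : X →ₗ[ℝ] X) :=
    hP_range ▸ LinearMap.IsIdempotentElem.isProj_range _ hP_idem'
  have hdisj := LinearMap.disjoint_ker_comap_range_of_symm_of_definite
    (ContinuousLinearMap.coeLM ℝ ∘ₗ (ζ : Xt →ₗ[ℝ] StrongDual ℝ X)) ε T hdef hsym
  exact ⟨LinearMap.injective_add_comp_of_isProj hP hdisj,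
    LinearMap.surjective_add_comp_of_isProj hP
      (LinearMap.sup_range_map_ker_eq_top_of_finrank_eq hdisj hrank)⟩

/-- Invertibility of the projectively perturbed Hessian operator: if `T : X → X̃` is a
symmetric Fredholm operator of index zero and `P : X → X` is a continuous projection onto
`ker T`, then `x ↦ T x + ε (P x)` is bijective (hence a Banach space isomorphism). -/
theorem perturbed_hessian_operator_bijective
    {X Xt : Type*} [NormedAddCommGroup X] [NormedSpace ℝ X] [CompleteSpace X]
    [NormedAddCommGroup Xt] [NormedSpace ℝ Xt] [CompleteSpace Xt]
    (ε : X →L[ℝ] Xt) (hε : Function.Injective ε)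
    (ζ : Xt →L[ℝ] StrongDual ℝ X) (hζ : Function.Injective ζ)
    (hdef : ∀ x : X, x ≠ 0 → ζ (ε x) x ≠ 0)
    (T : X →L[ℝ] Xt) (hT : FredholmIndexZero T)
    (hsym : ∀ x y : X, ζ (T x) y = ζ (T y) x)
    (P : X →L[ℝ] X) (hP_idem : P.comp P = P)
    (hP_range : LinearMap.range (P : X →ₗ[ℝ] X) = LinearMap.ker (T : X →ₗ[ℝ] Xt)) :
    Function.Bijective (fun x : X => T x + ε (P x)) :=
  perturbed_hessian_operator_bijective_general ε ζ hdef T hT hsym P hP_idem hP_range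
end
end

section
/- (Quadratic estimate for the difference with the Lyapunov–Schmidt reduction.) In Setting (B), with K, Π, Φ as above, there exist open neighborhoods U₁ ⊆ U of x∞ and V₁ ⊆ X̃ of 0 and a C¹ map Ψ : V₁ → U₁ with Φ(Ψ(α)) = α for all α ∈ V₁ and Ψ(Φ(x)) = x for all x ∈ U₁, together with an open neighborhood V₀ ⊆ V₁ of 0 satisfying Π(V₀) ⊆ V₁ and a constant C ∈ [1,∞), such that |E(Ψ(α)) − E(Ψ(Π(α)))| ≤ C · ‖M(Ψ(α))‖²_{X̃} for all α ∈ V₀. -/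
/-!
At `x∞` the Hessian `v w ↦ ζ (M'(x∞) v) w` of `E` is symmetric, so definiteness of `ζ ∘ ε` forces
`ε K ∩ range M'(x∞) = 0`. As `M'(x∞)` is Fredholm of index zero, `Φ'(x∞) = M'(x∞) + ε Π ε` is then
an isomorphism, and the inverse function theorem gives the local inverse `Ψ`.

Since `ε Π` is a projection and `α - M (Ψ α)` lies in its range, `α - ε Π α = (1 - ε Π) M (Ψ α)`.
Along the segment from `ε Π α` to `α` the derivative `ζ (M (Ψ γ)) ∘ Ψ'(γ)` of `E ∘ Ψ` is
`O(‖M (Ψ γ)‖)`, and `‖M (Ψ γ)‖ ≤ ‖M (Ψ α)‖ + L ‖α - ε Π α‖ = O(‖M (Ψ α)‖)` because `M ∘ Ψ` is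
locally Lipschitz; the mean value inequality gives the quadratic bound.
-/

open Function Set

noncomputable section

open Topology Filter

section LinearAlgebra

variable {K V W : Type*} [Field K] [AddCommGroup V] [Module K V] [AddCommGroup W] [Module K W]

theorem exists_mem_ker_sub_mem_range_of_finrank_eq (T ι : V →ₗ[K] W)
    [FiniteDimensional K (LinearMap.ker T)] [FiniteDimensional K (W ⧸ LinearMap.range T)]
    (hrank : Module.finrank K (LinearMap.ker T) = Module.finrank K (W ⧸ LinearMap.range T))
    (hdisj : ∀ k v, T k = 0 → T v = ι k → k = 0) (y : W) :
    ∃ k ∈ LinearMap.ker T, y - ι k ∈ LinearMap.range T := by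
  let φ : LinearMap.ker T →ₗ[K] W ⧸ LinearMap.range T :=
    (LinearMap.range T).mkQ ∘ₗ ι ∘ₗ (LinearMap.ker T).subtype
  have hφ : Injective φ := by
    refine (injective_iff_map_eq_zero φ).mpr fun k hk => Subtype.ext ?_
    obtain ⟨v, hv⟩ := (Submodule.Quotient.mk_eq_zero _).mp hk
    exact hdisj k v k.2 hv
  obtain ⟨k, hk⟩ := (LinearMap.injective_iff_surjective_of_finrank_eq_finrank hrank).mp hφ
    ((LinearMap.range T).mkQ y)
  refine ⟨k, k.2, (Submodule.Quotient.mk_eq_zero _).mp ?_⟩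
  rw [Submodule.Quotient.mk_sub, sub_eq_zero]
  exact hk.symm

theorem bijective_add_comp_of_finrank_eq (T ι : V →ₗ[K] W) (P : W →ₗ[K] V)
    [FiniteDimensional K (LinearMap.ker T)] [FiniteDimensional K (W ⧸ LinearMap.range T)]
    (hrank : Module.finrank K (LinearMap.ker T) = Module.finrank K (W ⧸ LinearMap.range T))
    (hdisj : ∀ k v, T k = 0 → T v = ι k → k = 0)
    (hP_mem : ∀ y, P y ∈ LinearMap.ker T) (hP_fix : ∀ k ∈ LinearMap.ker T, P (ι k) = k) :
    Bijective fun v => T v + ι (P (ι v)) := by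
  constructor
  · refine (injective_iff_map_eq_zero (T + ι ∘ₗ P ∘ₗ ι)).mpr fun v hv => ?_
    have hPv : P (ι v) = 0 :=
      hdisj _ (-v) (hP_mem _) (by rw [map_neg, neg_eq_iff_add_eq_zero]; exact hv)
    have hTv : T v = 0 := by simpa [hPv] using hv
    rw [← hP_fix v hTv, hPv]
  · intro y
    obtain ⟨k, hk, v, hv⟩ := exists_mem_ker_sub_mem_range_of_finrank_eq T ι hrank hdisj y
    have hfix : P (ι (k - P (ι v))) = k - P (ι v) :=
      hP_fix _ (sub_mem hk (hP_mem _))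
    refine ⟨v + (k - P (ι v)), ?_⟩
    dsimp only
    rw [map_add ι, map_add P, hfix, add_sub_cancel, map_add T, map_sub T,
      LinearMap.mem_ker.mp hk, LinearMap.mem_ker.mp (hP_mem _), sub_zero, add_zero, hv,
      sub_add_cancel]

end LinearAlgebra

theorem eq_zero_of_apply_eq_of_symm {X Y : Type*} [NormedAddCommGroup X] [NormedSpace ℝ X]
    [NormedAddCommGroup Y] [NormedSpace ℝ Y] {T ε : X →L[ℝ] Y} {ζ : Y →L[ℝ] StrongDual ℝ X}
    (hsymm : ∀ v w, ζ (T v) w = ζ (T w) v) (hdef : ∀ x, x ≠ 0 → ζ (ε x) x ≠ 0)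
    {k v : X} (hk : T k = 0) (hv : T v = ε k) : k = 0 := by
  by_contra hne
  apply hdef k hne
  rw [← hv, hsymm, hk, map_zero, zero_apply]

theorem ContinuousLinearMap.apply_apply_eq_self_of_range_eq_map {X Y D : Type*}
    [NormedAddCommGroup X] [NormedSpace ℝ X] [NormedAddCommGroup Y] [NormedSpace ℝ Y]
    [NormedAddCommGroup D] [NormedSpace ℝ D] {ε : X →L[ℝ] Y} {ζ : Y →L[ℝ] D}
    (hε : Injective ε) (hζ : Injective ζ) {Pd : D →L[ℝ] D}
    (hPd : Pd.comp Pd = Pd) {Pt : Y →L[ℝ] X} (hPt : ∀ y, ζ (ε (Pt y)) = Pd (ζ y))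
    {K : Submodule ℝ X}
    (hrange : LinearMap.range (Pd : D →ₗ[ℝ] D) = K.map ((ζ.comp ε : X →L[ℝ] D) : X →ₗ[ℝ] D))
    {k : X} (hk : k ∈ K) : Pt (ε k) = k := by
  obtain ⟨u, hu⟩ : ζ (ε k) ∈ LinearMap.range (Pd : D →ₗ[ℝ] D) := hrange ▸ ⟨k, hk, rfl⟩
  refine hε (hζ ?_)
  rw [hPt, ← hu]
  exact DFunLike.congr_fun hPd u

theorem ContDiffAt.exists_localInverse_contDiffOn {𝕂 X Y : Type*} [RCLike 𝕂]
    [NormedAddCommGroup X] [NormedSpace 𝕂 X] [CompleteSpace X]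
    [NormedAddCommGroup Y] [NormedSpace 𝕂 Y] {Φ : X → Y} {Φ' : X ≃L[𝕂] Y} {x : X}
    {U : Set X} (hU : IsOpen U) (hx : x ∈ U) (hΦ : ContDiffAt 𝕂 1 Φ x)
    (hΦ' : HasFDerivAt Φ (Φ' : X →L[𝕂] Y) x) :
    ∃ (U₁ : Set X) (V₁ : Set Y) (Ψ : Y → X),
      IsOpen U₁ ∧ x ∈ U₁ ∧ U₁ ⊆ U ∧ IsOpen V₁ ∧ Φ x ∈ V₁ ∧
      ContDiffOn 𝕂 1 Ψ V₁ ∧ MapsTo Ψ V₁ U₁ ∧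
      (∀ α ∈ V₁, Φ (Ψ α) = α) ∧ (∀ y ∈ U₁, Ψ (Φ y) = y) := by
  set F := hΦ.toOpenPartialHomeomorph Φ hΦ' one_ne_zero
  have hsrc : x ∈ F.source := hΦ.mem_toOpenPartialHomeomorph_source hΦ' one_ne_zero
  have hleft : ∀ y ∈ F.source, F.symm (Φ y) = y := fun y hy => F.left_inv hy
  have hright : ∀ α ∈ F.target, Φ (F.symm α) = α := fun α hα => F.right_inv hα
  obtain ⟨W, hW, hΨW⟩ :=
    (hΦ.to_localInverse hΦ' one_ne_zero).contDiffOn le_rfl (by simp)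
  obtain ⟨O, hOW, hO, hΦxO⟩ := mem_nhds_iff.mp hW
  set V₁ := F.target ∩ F.symm ⁻¹' U ∩ O
  have hΦxV₁ : Φ x ∈ V₁ :=
    ⟨⟨hΦ.image_mem_toOpenPartialHomeomorph_target hΦ' one_ne_zero,
      by simpa [hleft x hsrc] using hx⟩, hΦxO⟩
  refine ⟨F.source ∩ Φ ⁻¹' V₁, V₁, F.symm, F.isOpen_inter_preimage
    ((F.symm.isOpen_inter_preimage hU).inter hO), ⟨hsrc, hΦxV₁⟩, ?_,
    (F.symm.isOpen_inter_preimage hU).inter hO, hΦxV₁,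
    hΨW.mono fun α hα => hOW hα.2, ?_, fun α hα => hright α hα.1.1,
    fun y hy => hleft y hy.1⟩
  · rintro y ⟨hy, hyV₁⟩
    simpa [hleft y hy] using hyV₁.1.2
  · rintro α hα
    exact ⟨F.map_target hα.1.1, by simpa [hright α hα.1.1] using hα⟩

theorem ContinuousLinearMap.norm_sub_apply_le_of_sub_mem_range {𝕜 Y : Type*}
    [NontriviallyNormedField 𝕜] [NormedAddCommGroup Y] [NormedSpace 𝕜 Y] {B : Y →L[𝕜] Y}
    (hB : IsIdempotentElem B) {y m : Y} (h : y - m ∈ Set.range B) :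
    ‖y - B y‖ ≤ ‖1 - B‖ * ‖m‖ := by
  obtain ⟨z, hz⟩ := h
  have hBsub : B y - B m = y - m := by
    rw [← map_sub, ← hz]
    exact DFunLike.congr_fun hB z
  calc ‖y - B y‖ = ‖(1 - B) m‖ := by
        rw [sub_eq_sub_iff_sub_eq_sub.mp hBsub.symm]; rfl
    _ ≤ ‖1 - B‖ * ‖m‖ := (1 - B).le_opNorm m

theorem abs_sub_le_of_norm_hasFDerivWithinAt_le_mul_norm {Y F : Type*}
    [NormedAddCommGroup Y] [NormedSpace ℝ Y] [NormedAddCommGroup F] {s : Set Y}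
    (hs : Convex ℝ s) {f : Y → ℝ} {f' : Y → StrongDual ℝ Y} {g : Y → F} {c : ℝ} {L : NNReal}
    (hc : 0 ≤ c) (hf : ∀ y ∈ s, HasFDerivWithinAt f (f' y) s y)
    (hf' : ∀ y ∈ s, ‖f' y‖ ≤ c * ‖g y‖) (hg : LipschitzOnWith L g s) {a b : Y}
    (ha : a ∈ s) (hb : b ∈ s) :
    |f a - f b| ≤ c * (‖g a‖ + L * ‖a - b‖) * ‖a - b‖ := by
  have hseg : segment ℝ b a ⊆ s := hs.segment_subset hb ha
  have hbound : ∀ y ∈ segment ℝ b a, ‖f' y‖ ≤ c * (‖g a‖ + L * ‖a - b‖) := by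
    intro y hy
    have hya : dist y a ≤ dist a b := by
      rw [dist_comm a b]
      linarith [dist_add_dist_of_mem_segment hy, dist_nonneg (x := b) (y := y)]
    have hgy : ‖g y‖ ≤ ‖g a‖ + L * ‖a - b‖ :=
      calc ‖g y‖ ≤ ‖g a‖ + dist (g y) (g a) := norm_le_norm_add_norm_sub' _ _ |>.trans_eq
            (by rw [dist_eq_norm])
        _ ≤ ‖g a‖ + L * dist y a := by gcongr; exact hg.dist_le_mul y (hseg hy) a ha
        _ ≤ ‖g a‖ + L * ‖a - b‖ := by rw [← dist_eq_norm]; gcongr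
    exact (hf' y (hseg hy)).trans (by gcongr)
  simpa [Real.norm_eq_abs] using (convex_segment b a).norm_image_sub_le_of_norm_hasFDerivWithin_le
    (fun y hy => (hf y (hseg hy)).mono hseg) hbound (left_mem_segment ℝ b a)
    (right_mem_segment ℝ b a)

theorem exists_nhds_abs_sub_le_mul_norm_sq {Y F : Type*} [NormedAddCommGroup Y]
    [NormedSpace ℝ Y] [NormedAddCommGroup F] [NormedSpace ℝ F] {f : Y → ℝ}
    {f' : Y → StrongDual ℝ Y} {g : Y → F} {B : Y →L[ℝ] Y} {c k : ℝ} (hc : 0 ≤ c)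
    (hf : ∀ᶠ y in 𝓝 0, HasFDerivAt f (f' y) y) (hf' : ∀ᶠ y in 𝓝 0, ‖f' y‖ ≤ c * ‖g y‖)
    (hg : ContDiffAt ℝ 1 g 0) (hB : ∀ᶠ y in 𝓝 0, ‖y - B y‖ ≤ k * ‖g y‖) {V : Set Y}
    (hV : V ∈ 𝓝 0) :
    ∃ V₀ : Set Y, IsOpen V₀ ∧ 0 ∈ V₀ ∧ V₀ ⊆ V ∧ MapsTo B V₀ V ∧
      ∃ C : ℝ, 1 ≤ C ∧ ∀ y ∈ V₀, |f y - f (B y)| ≤ C * ‖g y‖ ^ 2 := by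
  obtain ⟨L, t, ht, hL⟩ := hg.exists_lipschitzOnWith
  have htV : ∀ᶠ y in 𝓝 0, y ∈ t ∧ y ∈ V := inter_mem ht hV
  obtain ⟨ρ, hρ, hball⟩ :=
    Metric.eventually_nhds_iff_ball.mp (hf.and (hf'.and (hB.and htV)))
  set s := Metric.ball (0 : Y) ρ
  have h0s : (0 : Y) ∈ s := Metric.mem_ball_self hρ
  refine ⟨s ∩ B ⁻¹' s, Metric.isOpen_ball.inter (Metric.isOpen_ball.preimage B.continuous),
    ⟨h0s, by simpa using h0s⟩, fun y hy => (hball y hy.1).2.2.2.2,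
    fun y hy => (hball _ hy.2).2.2.2.2, max 1 (c * (1 + L * k) * k), le_max_left _ _,
    fun y hy => ?_⟩
  have hyB : ‖y - B y‖ ≤ k * ‖g y‖ := (hball y hy.1).2.2.1
  have hk : 0 ≤ k * ‖g y‖ := (norm_nonneg _).trans hyB
  calc |f y - f (B y)| ≤ c * (‖g y‖ + L * ‖y - B y‖) * ‖y - B y‖ :=
        abs_sub_le_of_norm_hasFDerivWithinAt_le_mul_norm (convex_ball 0 ρ) hc
          (fun z hz => (hball z hz).1.hasFDerivWithinAt) (fun z hz => (hball z hz).2.1)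
          (hL.mono fun z hz => (hball z hz).2.2.2.1) hy.1 hy.2
    _ ≤ c * (‖g y‖ + L * (k * ‖g y‖)) * (k * ‖g y‖) := by gcongr
    _ = c * (1 + L * k) * k * ‖g y‖ ^ 2 := by ring
    _ ≤ max 1 (c * (1 + L * k) * k) * ‖g y‖ ^ 2 := by gcongr; exact le_max_right _ _

theorem exists_nhds_abs_sub_comp_le_mul_norm_sq {X Y : Type*} [NormedAddCommGroup X]
    [NormedSpace ℝ X] [NormedAddCommGroup Y] [NormedSpace ℝ Y] (ζ : Y →L[ℝ] StrongDual ℝ X)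
    {E : X → ℝ} {M : X → Y} {Ψ : Y → X} {U : Set X} {V : Set Y} (hU : IsOpen U)
    (hV : V ∈ 𝓝 0) (hE : ∀ x ∈ U, HasFDerivAt E (ζ (M x)) x) (hM : ContDiffOn ℝ 1 M U)
    (hΨ : ContDiffOn ℝ 1 Ψ V) (hΨU : MapsTo Ψ V U) {B : Y →L[ℝ] Y} (hB : IsIdempotentElem B)
    (hrange : ∀ y ∈ V, y - M (Ψ y) ∈ Set.range B) :
    ∃ V₀ : Set Y, IsOpen V₀ ∧ 0 ∈ V₀ ∧ V₀ ⊆ V ∧ MapsTo B V₀ V ∧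
      ∃ C : ℝ, 1 ≤ C ∧ ∀ y ∈ V₀, |E (Ψ y) - E (Ψ (B y))| ≤ C * ‖M (Ψ y)‖ ^ 2 := by
  have hΨ0 : ContDiffAt ℝ 1 Ψ 0 := hΨ.contDiffAt hV
  set D := ‖fderiv ℝ Ψ 0‖ + 1
  have hD : ∀ᶠ y in 𝓝 0, ‖fderiv ℝ Ψ y‖ ≤ D :=
    ((hΨ0.continuousAt_fderiv one_ne_zero).norm.eventually_lt continuousAt_const
      (lt_add_one _)).mono fun _ => le_of_lt
  have hderiv : ∀ᶠ y in 𝓝 0,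
      HasFDerivAt (E ∘ Ψ) ((ζ (M (Ψ y))).comp (fderiv ℝ Ψ y)) y := by
    filter_upwards [hV, hΨ0.eventually (by simp)] with y hyV hΨy
    exact (hE _ (hΨU hyV)).comp y (hΨy.differentiableAt one_ne_zero).hasFDerivAt
  have hbound : ∀ᶠ y in 𝓝 0,
      ‖(ζ (M (Ψ y))).comp (fderiv ℝ Ψ y)‖ ≤ ‖ζ‖ * D * ‖(M ∘ Ψ) y‖ := by
    filter_upwards [hD] with y hy
    calc ‖(ζ (M (Ψ y))).comp (fderiv ℝ Ψ y)‖ ≤ ‖ζ (M (Ψ y))‖ * ‖fderiv ℝ Ψ y‖ :=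
          ContinuousLinearMap.opNorm_comp_le _ _
      _ ≤ ‖ζ‖ * ‖M (Ψ y)‖ * D := by gcongr; exact ζ.le_opNorm _
      _ = ‖ζ‖ * D * ‖(M ∘ Ψ) y‖ := by rw [comp_apply]; ring
  exact exists_nhds_abs_sub_le_mul_norm_sq (by positivity) hderiv hbound
    ((hM.contDiffAt (hU.mem_nhds (hΨU (mem_of_mem_nhds hV)))).comp 0 hΨ0)
    (Filter.mem_of_superset hV fun y hy =>
      ContinuousLinearMap.norm_sub_apply_le_of_sub_mem_range hB (hrange y hy)) hV

/-- Quadratic estimate for the difference with the Lyapunov–Schmidt reduction: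
`|E (Ψ α) - E (Ψ (Π α))| ≤ C ‖M (Ψ α)‖²_{X̃}` (Setting (B)). -/
theorem quadratic_estimate_lyapunov_schmidt
    {X Xt : Type*} [NormedAddCommGroup X] [NormedSpace ℝ X] [CompleteSpace X]
    [NormedAddCommGroup Xt] [NormedSpace ℝ Xt] [CompleteSpace Xt]
    -- Setting (B)
    (ε : X →L[ℝ] Xt) (hε : Function.Injective ε)
    (ζ : Xt →L[ℝ] StrongDual ℝ X) (hζ : Function.Injective ζ)
    (hdef : ∀ x : X, x ≠ 0 → ζ (ε x) x ≠ 0)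
    (U : Set X) (hU : IsOpen U)
    (E : X → ℝ) (hE : ContDiffOn ℝ 2 E U)
    (M : X → Xt) (hMC1 : ContDiffOn ℝ 1 M U)
    (hgrad : ∀ x ∈ U, ∀ v : X, fderiv ℝ E x v = ζ (M x) v)
    (x_inf : X) (hx : x_inf ∈ U) (hMcrit : M x_inf = 0)
    (hFred : FredholmIndexZero (fderiv ℝ M x_inf))
    -- K = ker M'(x_inf); Π : X* → X* a continuous projection with range j(K),
    -- inducing Pt : X̃ → X.
    (Pd : StrongDual ℝ X →L[ℝ] StrongDual ℝ X)
    (hPd_idem : Pd.comp Pd = Pd)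
    (hPd_range : LinearMap.range (Pd : StrongDual ℝ X →ₗ[ℝ] StrongDual ℝ X)
      = Submodule.map ((ζ.comp ε : X →L[ℝ] StrongDual ℝ X) : X →ₗ[ℝ] StrongDual ℝ X) (LinearMap.ker (fderiv ℝ M x_inf : X →ₗ[ℝ] Xt)))
    (Pt : Xt →L[ℝ] X)
    (hPt_mem : ∀ y : Xt, Pt y ∈ LinearMap.ker (fderiv ℝ M x_inf : X →ₗ[ℝ] Xt))
    (hPt_compat : ∀ y : Xt, ζ (ε (Pt y)) = Pd (ζ y)) :
    ∃ (U₁ : Set X) (V₁ : Set Xt) (Ψ : Xt → X),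
      IsOpen U₁ ∧ x_inf ∈ U₁ ∧ U₁ ⊆ U ∧ IsOpen V₁ ∧ (0 : Xt) ∈ V₁ ∧
      ContDiffOn ℝ 1 Ψ V₁ ∧ MapsTo Ψ V₁ U₁ ∧
      (∀ α ∈ V₁, M (Ψ α) + ε (Pt (ε (Ψ α - x_inf))) = α) ∧
      (∀ x ∈ U₁, Ψ (M x + ε (Pt (ε (x - x_inf)))) = x) ∧
      ∃ (V₀ : Set Xt) (C : ℝ),
        IsOpen V₀ ∧ (0 : Xt) ∈ V₀ ∧ V₀ ⊆ V₁ ∧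
        (∀ α ∈ V₀, ε (Pt α) ∈ V₁) ∧ 1 ≤ C ∧
        ∀ α ∈ V₀, |E (Ψ α) - E (Ψ (ε (Pt α)))| ≤ C * ‖M (Ψ α)‖ ^ 2 := by
  set T := fderiv ℝ M x_inf
  have hMx : ContDiffAt ℝ 1 M x_inf := hMC1.contDiffAt (hU.mem_nhds hx)
  have hT : HasFDerivAt M T x_inf := (hMx.differentiableAt one_ne_zero).hasFDerivAt
  have hEU : ∀ y ∈ U, HasFDerivAt E (ζ (M y)) y := fun y hy =>
    ((hE.contDiffAt (hU.mem_nhds hy)).differentiableAt two_ne_zero).hasFDerivAt.congr_fderiv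
      (ContinuousLinearMap.ext (hgrad y hy))
  have hsymm : ∀ v w, ζ (T v) w = ζ (T w) v :=
    second_derivative_symmetric_of_eventually (eventually_of_mem (hU.mem_nhds hx) hEU)
      (ζ.hasFDerivAt.comp x_inf hT)
  have hfix : ∀ k ∈ LinearMap.ker (T : X →ₗ[ℝ] Xt), Pt (ε k) = k := fun _ hk =>
    ContinuousLinearMap.apply_apply_eq_self_of_range_eq_map hε hζ hPd_idem hPt_compat
      hPd_range hk
  obtain ⟨_, -, _, hrank⟩ := hFred
  have hbij := bijective_add_comp_of_finrank_eq (T : X →ₗ[ℝ] Xt) ε Pt hrank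
    (fun _ _ => eq_zero_of_apply_eq_of_symm hsymm hdef) hPt_mem hfix
  set B := ε.comp Pt
  let A : X ≃L[ℝ] Xt := (LinearEquiv.ofBijective (T + B.comp ε : X →L[ℝ] Xt)
    hbij).toContinuousLinearEquivOfContinuous (T + B.comp ε).continuous
  have hΦ : HasFDerivAt (fun x => M x + ε (Pt (ε (x - x_inf)))) (A : X →L[ℝ] Xt) x_inf :=
    hT.add ((B.comp ε).hasFDerivAt.comp x_inf ((hasFDerivAt_id x_inf).sub_const x_inf))
  obtain ⟨U₁, V₁, Ψ, hU₁, hxU₁, hU₁U, hV₁, h0V₁, hΨ, hΨV₁, hΦΨ, hΨΦ⟩ :=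
    (hMx.add (by fun_prop)).exists_localInverse_contDiffOn hU hx hΦ
  simp only [sub_self, map_zero, hMcrit, add_zero] at h0V₁
  have hB : IsIdempotentElem B :=
    ContinuousLinearMap.ext fun y => congrArg ε (hfix _ (hPt_mem y))
  obtain ⟨V₀, hV₀, h0V₀, hV₀V₁, hBV₀, C, hC, hest⟩ :=
    exists_nhds_abs_sub_comp_le_mul_norm_sq ζ hU (hV₁.mem_nhds h0V₁) hEU hMC1 hΨ
      (hΨV₁.mono_right hU₁U) hB fun y hy => ⟨ε (Ψ y - x_inf), eq_sub_of_add_eq' (hΦΨ y hy)⟩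
  exact ⟨U₁, V₁, Ψ, hU₁, hxU₁, hU₁U, hV₁, h0V₁, hΨ, hΨV₁, hΦΨ, hΨΦ,
    V₀, C, hV₀, h0V₀, hV₀V₁, hBV₀, hC, hest⟩
end
end

section
/- (Analyticity of the Lyapunov–Schmidt reduction.) In Setting (B), assume in addition that M : U → X̃ is real analytic, and let K, Π, Φ be as above. Then there exist open neighborhoods U₀ ⊆ U of x∞ and V₀ ⊆ X̃ of 0 and a map Ψ : V₀ → U₀ with Φ(Ψ(α)) = α for all α ∈ V₀ and Ψ(Φ(x)) = x for all x ∈ U₀, such that Ψ is real analytic on V₀; in particular, the Lyapunov–Schmidt reduction Γ : K ∩ V₀ → ℝ defined by Γ(α) := E(Ψ(α)) is real analytic on K ∩ V₀. -/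
/-
Pairing with the kernel `K` of `A = M'(x∞)`, the symmetry of the Hessian of `E`
(`ζ (A u) v = ζ (A v) u`) and the definiteness of `j = ζ ∘ ε` show that `A + Π` is injective and
that `ε K` meets the range of `A` only in `0`; as `A` is Fredholm of index zero, `ε K` is then a
complement of that range and `A + Π` is also surjective. So `Φ` is analytic with invertible
derivative at `x∞`, and the analytic inverse function theorem provides `Ψ`. Finally `E` is
analytic on `U`, because its derivative `ζ ∘ M` is (the Taylor series of `E` is the termwise
primitive of that of `ζ ∘ M`), and hence so is `Γ = E ∘ Ψ`.
-/

open Function Set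

noncomputable section

open Filter
open scoped Topology ENNReal

namespace FormalMultilinearSeries

variable {G F : Type*} [NormedAddCommGroup G] [NormedSpace ℝ G]
  [NormedAddCommGroup F] [NormedSpace ℝ F]

def primitive (c : F) (q : FormalMultilinearSeries ℝ G (G →L[ℝ] F)) :
    FormalMultilinearSeries ℝ G F
  | 0 => (continuousMultilinearCurryFin0 ℝ G F).symm c
  | m + 1 => ((m : ℝ) + 1)⁻¹ • (continuousMultilinearCurryRightEquiv' ℝ m G F).symm (q m)

variable (c : F) (q : FormalMultilinearSeries ℝ G (G →L[ℝ] F))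

@[simp]
theorem primitive_zero_apply (v : Fin 0 → G) : q.primitive c 0 v = c := rfl

theorem primitive_succ_apply_const (n : ℕ) (y : G) :
    q.primitive c (n + 1) (fun _ => y) = ((n : ℝ) + 1)⁻¹ • q n (fun _ => y) y := by
  simp only [primitive, _root_.smul_apply,
    continuousMultilinearCurryRightEquiv_symm_apply']
  rfl

theorem norm_primitive_succ_le (n : ℕ) : ‖q.primitive c (n + 1)‖ ≤ ‖q n‖ := by
  calc ‖q.primitive c (n + 1)‖
      ≤ ‖((n : ℝ) + 1)⁻¹‖ * ‖(continuousMultilinearCurryRightEquiv' ℝ n G F).symm (q n)‖ :=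
        norm_smul_le ((n : ℝ) + 1)⁻¹ ((continuousMultilinearCurryRightEquiv' ℝ n G F).symm (q n))
    _ ≤ 1 * ‖q n‖ := by
        rw [LinearIsometryEquiv.norm_map]
        gcongr
        rw [norm_inv, Real.norm_of_nonneg (by positivity)]
        exact inv_le_one_of_one_le₀ (by simp)
    _ = ‖q n‖ := one_mul _

theorem radius_le_radius_primitive : q.radius ≤ (q.primitive c).radius := by
  refine ENNReal.le_of_forall_nnreal_lt fun t ht => (q.primitive c).le_radius_of_summable ?_
  rw [← summable_nat_add_iff 1]
  refine .of_nonneg_of_le (fun n => by positivity) (fun n => ?_)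
    ((q.summable_norm_mul_pow ht).mul_right (t : ℝ))
  rw [pow_succ, ← mul_assoc]
  gcongr
  exact q.norm_primitive_succ_le c n

end FormalMultilinearSeries

section Primitive

variable {G F : Type*} [NormedAddCommGroup G] [NormedSpace ℝ G]
  [NormedAddCommGroup F] [NormedSpace ℝ F] [CompleteSpace F]

theorem HasFPowerSeriesOnBall.hasSum_integral_segment {D : G → G →L[ℝ] F}
    {q : FormalMultilinearSeries ℝ G (G →L[ℝ] F)} {x : G} {r : ℝ≥0∞}
    (hD : HasFPowerSeriesOnBall D q x r) {y : G} (hy : y ∈ Metric.eball (0 : G) r) :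
    HasSum (fun n : ℕ => ((n : ℝ) + 1)⁻¹ • q n (fun _ => y) y)
      (∫ s in (0 : ℝ)..1, D (x + s • y) y) := by
  have hterm (n : ℕ) (s : ℝ) : q n (fun _ => s • y) y = s ^ n • q n (fun _ => y) y := by
    rw [(q n).map_smul_univ (fun _ => s) (fun _ => y)]
    simp
  have hnorm_term (n : ℕ) : ‖q n (fun _ => y) y‖ ≤ ‖q n‖ * ‖y‖ ^ n * ‖y‖ := by
    simpa using ((q n) (fun _ => y)).le_of_opNorm_le ((q n).le_opNorm _) y
  have habs {s : ℝ} (hs : s ∈ uIoc (0 : ℝ) 1) : |s| ≤ 1 := by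
    rw [uIoc_of_le zero_le_one] at hs
    exact abs_le.2 ⟨by linarith [hs.1], hs.2⟩
  have hsmul_mem {s : ℝ} (hs : |s| ≤ 1) : s • y ∈ Metric.eball (0 : G) r := by
    refine mem_eball_zero_iff.2 (lt_of_le_of_lt ?_ (mem_eball_zero_iff.1 hy))
    rw [enorm_smul]
    refine mul_le_of_le_one_left' ?_
    rwa [Real.enorm_eq_ofReal_abs, ENNReal.ofReal_le_one]
  have hlim : HasSum (fun n : ℕ => ∫ s in (0 : ℝ)..1, s ^ n • q n (fun _ => y) y)
      (∫ s in (0 : ℝ)..1, D (x + s • y) y) := by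
    refine intervalIntegral.hasSum_integral_of_dominated_convergence
      (fun n _ => ‖q n‖ * ‖y‖ ^ n * ‖y‖) (fun n => by fun_prop) (fun n => ?_) ?_
      intervalIntegrable_const ?_
    · refine MeasureTheory.ae_of_all _ fun s hs => ?_
      rw [norm_smul, norm_pow, Real.norm_eq_abs]
      exact (mul_le_of_le_one_left (norm_nonneg _) (pow_le_one₀ (abs_nonneg _) (habs hs))).trans
        (hnorm_term n)
    · refine MeasureTheory.ae_of_all _ fun s _ => ?_
      have hyq : (‖y‖₊ : ℝ≥0∞) < q.radius := (mem_eball_zero_iff.1 hy).trans_le hD.r_le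
      simpa using (q.summable_norm_mul_pow hyq).mul_right ‖y‖
    · refine MeasureTheory.ae_of_all _ fun s hs => ?_
      simpa [hterm] using
        (ContinuousLinearMap.apply ℝ F y).hasSum (hD.hasSum (hsmul_mem (habs hs)))
  convert hlim using 2 with n
  rw [intervalIntegral.integral_smul_const, integral_pow]
  simp

theorem sub_eq_integral_segment_of_hasFDerivAt {g : G → F} {D : G → G →L[ℝ] F} {x y : G}
    (hg : ∀ s ∈ Icc (0 : ℝ) 1, HasFDerivAt g (D (x + s • y)) (x + s • y))
    (hD : ContinuousOn (fun s : ℝ => D (x + s • y)) (Icc 0 1)) :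
    g (x + y) - g x = ∫ s in (0 : ℝ)..1, D (x + s • y) y := by
  have hline (s : ℝ) : HasDerivAt (fun t : ℝ => x + t • y) y s := by
    simpa using ((hasDerivAt_id s).smul_const y).const_add x
  rw [← uIcc_of_le zero_le_one] at hg hD
  simpa using (intervalIntegral.integral_eq_sub_of_hasDerivAt
    (fun s hs => (hg s hs).comp_hasDerivAt s (hline s))
    (hD.clm_apply continuousOn_const).intervalIntegrable).symm

theorem analyticAt_of_eventually_hasFDerivAt {g : G → F} {D : G → G →L[ℝ] F} {x : G}
    (hg : ∀ᶠ z in 𝓝 x, HasFDerivAt g (D z) z) (hD : AnalyticAt ℝ D x) : AnalyticAt ℝ g x := by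
  obtain ⟨q, r, hq⟩ := hD
  obtain ⟨δ, hδ, hδg⟩ := EMetric.mem_nhds_iff.1 hg
  set ρ := min r δ
  have hqρ : HasFPowerSeriesOnBall D q x ρ := hq.mono (lt_min hq.r_pos hδ) (min_le_left _ _)
  refine ⟨q.primitive (g x), ρ, ?_⟩
  refine ⟨hqρ.r_le.trans (q.radius_le_radius_primitive _), hqρ.r_pos, fun {y} hy => ?_⟩
  have hseg : ∀ s ∈ Icc (0 : ℝ) 1, x + s • y ∈ Metric.eball x ρ := by
    intro s hs
    rw [Metric.mem_eball, edist_eq_enorm_sub, add_sub_cancel_left, enorm_smul]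
    refine lt_of_le_of_lt (mul_le_of_le_one_left' ?_) (mem_eball_zero_iff.1 hy)
    rw [Real.enorm_eq_ofReal_abs, ENNReal.ofReal_le_one, abs_of_nonneg hs.1]
    exact hs.2
  have hderiv : ∀ s ∈ Icc (0 : ℝ) 1, HasFDerivAt g (D (x + s • y)) (x + s • y) :=
    fun s hs => hδg (Metric.eball_subset_eball (min_le_right _ _) (hseg s hs))
  have hcont : ContinuousOn (fun s : ℝ => D (x + s • y)) (Icc 0 1) :=
    hqρ.continuousOn.comp (by fun_prop) hseg
  have hsucc : HasSum (fun n => q.primitive (g x) (n + 1) (fun _ => y)) (g (x + y) - g x) := by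
    simpa only [q.primitive_succ_apply_const, sub_eq_integral_segment_of_hasFDerivAt hderiv hcont]
      using hqρ.hasSum_integral_segment hy
  simpa using HasSum.zero_add (f := fun n => q.primitive (g x) n (fun _ => y)) hsucc

theorem analyticOnNhd_of_hasFDerivAt {g : G → F} {D : G → G →L[ℝ] F} {s : Set G} (hs : IsOpen s)
    (hg : ∀ x ∈ s, HasFDerivAt g (D x) x) (hD : AnalyticOnNhd ℝ D s) : AnalyticOnNhd ℝ g s :=
  fun x hx => analyticAt_of_eventually_hasFDerivAt (eventually_of_mem (hs.mem_nhds hx) hg) (hD x hx)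

end Primitive

theorem AnalyticAt.exists_openPartialHomeomorph_analyticOnNhd_symm
    {𝕜 E F : Type*} [NontriviallyNormedField 𝕜] [NormedAddCommGroup E] [NormedSpace 𝕜 E]
    [CompleteSpace E] [NormedAddCommGroup F] [NormedSpace 𝕜 F] [CompleteSpace F]
    {f : E → F} {f' : E ≃L[𝕜] F} {a : E} {s : Set E} (hf : AnalyticAt 𝕜 f a)
    (hf' : HasFDerivAt f (f' : E →L[𝕜] F) a) (hs : s ∈ 𝓝 a) :
    ∃ e : OpenPartialHomeomorph E F, ⇑e = f ∧ a ∈ e.source ∧ e.source ⊆ s ∧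
      AnalyticOnNhd 𝕜 e.symm e.target := by
  -- on the restricted source the derivative stays invertible, so `e.symm` is analytic everywhere
  have hgood : ∀ᶠ x in 𝓝 a, x ∈ s ∧ AnalyticAt 𝕜 f x ∧
      fderiv 𝕜 f x ∈ range ((↑) : (E ≃L[𝕜] F) → E →L[𝕜] F) :=
    Eventually.and hs <| hf.eventually_analyticAt.and <|
      hf.fderiv.continuousAt.preimage_mem_nhds <|
        ContinuousLinearEquiv.isOpen.mem_nhds ⟨f', hf'.fderiv.symm⟩
  obtain ⟨W, hWgood, hWopen, haW⟩ := mem_nhds_iff.1 hgood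
  have hstrict : HasStrictFDerivAt f (f' : E →L[𝕜] F) a := hf'.fderiv ▸ hf.hasStrictFDerivAt
  set e := (hstrict.toOpenPartialHomeomorph f).restrOpen W hWopen
  have he : ⇑e = f := rfl
  refine ⟨e, he, ⟨hstrict.mem_toOpenPartialHomeomorph_source, haW⟩,
    fun x hx => (hWgood hx.2).1, fun y hy => ?_⟩
  obtain ⟨-, hana, i, hi⟩ := hWgood (e.map_target hy).2
  exact e.analyticAt_symm hy (he ▸ hana) (he ▸ hi.symm)

section LyapunovSchmidt

variable {X Y : Type*} [NormedAddCommGroup X] [NormedSpace ℝ X]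
  [NormedAddCommGroup Y] [NormedSpace ℝ Y]

theorem ContinuousLinearMap.injective_of_apply_self_ne_zero (j : X →L[ℝ] StrongDual ℝ X)
    (hj : ∀ x : X, x ≠ 0 → j x x ≠ 0) : Injective j := by
  refine (injective_iff_map_eq_zero j).2 fun x hx => ?_
  by_contra hne
  exact hj x hne (by simp [hx])

theorem induced_projection_apply_of_mem {K : Submodule ℝ X} (ε : X →L[ℝ] Y)
    (ζ : Y →L[ℝ] StrongDual ℝ X) (hj : Injective (ζ.comp ε))
    {Pd : StrongDual ℝ X →L[ℝ] StrongDual ℝ X} (hPd_idem : Pd.comp Pd = Pd)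
    (hPd_range : LinearMap.range (Pd : StrongDual ℝ X →ₗ[ℝ] StrongDual ℝ X)
      = K.map ((ζ.comp ε : X →L[ℝ] StrongDual ℝ X) : X →ₗ[ℝ] StrongDual ℝ X))
    {P : Y →L[ℝ] X} (hP : ∀ y, ζ (ε (P y)) = Pd (ζ y)) {k : X} (hk : k ∈ K) : P (ε k) = k := by
  obtain ⟨w, hw⟩ : ζ (ε k) ∈ LinearMap.range (Pd : StrongDual ℝ X →ₗ[ℝ] StrongDual ℝ X) :=
    hPd_range ▸ Submodule.mem_map_of_mem hk
  refine hj ?_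
  change ζ (ε (P (ε k))) = ζ (ε k)
  rw [hP, ← hw]
  exact congrArg (· w) hPd_idem

theorem gradient_map_fderiv_symm {E : X → ℝ} {M : X → Y} {A : X →L[ℝ] Y} {x : X}
    (ζ : Y →L[ℝ] StrongDual ℝ X) (hE : ContDiffAt ℝ 2 E x)
    (hgrad : fderiv ℝ E =ᶠ[𝓝 x] fun z => ζ (M z)) (hM : HasFDerivAt M A x) (u v : X) :
    ζ (A u) v = ζ (A v) u := by
  have hE'' : fderiv ℝ (fderiv ℝ E) x = ζ.comp A := by
    rw [hgrad.fderiv_eq]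
    exact (ζ.hasFDerivAt.comp x hM).fderiv
  simpa [hE''] using (hE.isSymmSndFDerivAt (by simp)).eq u v

variable {A ε : X →L[ℝ] Y} {ζ : Y →L[ℝ] StrongDual ℝ X}

theorem eq_zero_of_mem_ker_of_apply_mem_range (hsymm : ∀ u v, ζ (A u) v = ζ (A v) u)
    (hdef : ∀ x : X, x ≠ 0 → ζ (ε x) x ≠ 0) {k : X} (hk : k ∈ LinearMap.ker (A : X →ₗ[ℝ] Y))
    (hrange : ε k ∈ LinearMap.range (A : X →ₗ[ℝ] Y)) : k = 0 := by
  obtain ⟨x, hx⟩ := hrange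
  by_contra hne
  apply hdef k hne
  rw [← hx]
  change ζ (A x) k = 0
  simp [hsymm x k, show A k = 0 from hk]

variable {P : Y →L[ℝ] X}

theorem injective_add_comp_projection (hsymm : ∀ u v, ζ (A u) v = ζ (A v) u)
    (hdef : ∀ x : X, x ≠ 0 → ζ (ε x) x ≠ 0) (hP_mem : ∀ y, P y ∈ LinearMap.ker (A : X →ₗ[ℝ] Y))
    (hP_id : ∀ k ∈ LinearMap.ker (A : X →ₗ[ℝ] Y), P (ε k) = k) :
    Injective (A + ε.comp (P.comp ε)) := by
  refine (injective_iff_map_eq_zero _).2 fun x hx => ?_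
  set k := P (ε x)
  have hAx : A x + ε k = 0 := hx
  -- pairing with `k` kills `A x`, since `ζ (A x) k = ζ (A k) x = 0`
  have hk : k = 0 := by
    by_contra hne
    apply hdef k hne
    have h := congrArg (fun y => ζ y k) hAx
    simpa [hsymm x k, show A k = 0 from hP_mem (ε x)] using h
  have hxK : x ∈ LinearMap.ker (A : X →ₗ[ℝ] Y) := by
    simpa [hk] using hAx
  rw [← hP_id x hxK]
  exact hk

theorem surjective_add_comp_projection (hFred : FredholmIndexZero A)
    (hsymm : ∀ u v, ζ (A u) v = ζ (A v) u)
    (hdef : ∀ x : X, x ≠ 0 → ζ (ε x) x ≠ 0) (hP_mem : ∀ y, P y ∈ LinearMap.ker (A : X →ₗ[ℝ] Y))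
    (hP_id : ∀ k ∈ LinearMap.ker (A : X →ₗ[ℝ] Y), P (ε k) = k) :
    Surjective (A + ε.comp (P.comp ε)) := by
  set K := LinearMap.ker (A : X →ₗ[ℝ] Y)
  set R := LinearMap.range (A : X →ₗ[ℝ] Y)
  obtain ⟨hKfin, -, hQfin, hrank⟩ := hFred
  -- `k ↦ [ε k]` is injective from `K` to `Y ⧸ R`, hence bijective by the index condition
  set φ : K →ₗ[ℝ] Y ⧸ R := R.mkQ ∘ₗ (ε : X →ₗ[ℝ] Y) ∘ₗ K.subtype
  have hφ : Injective φ := by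
    refine (injective_iff_map_eq_zero φ).2 fun k hk => Subtype.ext ?_
    exact eq_zero_of_mem_ker_of_apply_mem_range hsymm hdef k.2
      ((Submodule.Quotient.mk_eq_zero R).1 hk)
  intro y
  obtain ⟨k, hk⟩ := (LinearMap.injective_iff_surjective_of_finrank_eq_finrank hrank).1 hφ (R.mkQ y)
  obtain ⟨x, hx : A x = y - ε k⟩ : y - ε k ∈ R := (Submodule.Quotient.eq R).1 hk.symm
  refine ⟨x + (k - P (ε x)), ?_⟩
  have hA : A (k - P (ε x)) = 0 := K.sub_mem k.2 (hP_mem (ε x))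
  have hP : P (ε (x + (k - P (ε x)))) = k := by
    simp [hP_id k k.2, hP_id _ (hP_mem (ε x))]
  rw [add_apply, ContinuousLinearMap.comp_apply, ContinuousLinearMap.comp_apply, hP, map_add, hA,
    hx, add_zero, sub_add_cancel]

theorem bijective_add_comp_projection (hFred : FredholmIndexZero A)
    (hsymm : ∀ u v, ζ (A u) v = ζ (A v) u)
    (hdef : ∀ x : X, x ≠ 0 → ζ (ε x) x ≠ 0) (hP_mem : ∀ y, P y ∈ LinearMap.ker (A : X →ₗ[ℝ] Y))
    (hP_id : ∀ k ∈ LinearMap.ker (A : X →ₗ[ℝ] Y), P (ε k) = k) :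
    Bijective (A + ε.comp (P.comp ε)) :=
  ⟨injective_add_comp_projection hsymm hdef hP_mem hP_id,
    surjective_add_comp_projection hFred hsymm hdef hP_mem hP_id⟩

end LyapunovSchmidt

theorem analyticity_lyapunov_schmidt_reduction_general
    {X Xt : Type*} [NormedAddCommGroup X] [NormedSpace ℝ X] [CompleteSpace X]
    [NormedAddCommGroup Xt] [NormedSpace ℝ Xt] [CompleteSpace Xt]
    -- Setting (B)
    (ε : X →L[ℝ] Xt)
    (ζ : Xt →L[ℝ] StrongDual ℝ X)
    (hdef : ∀ x : X, x ≠ 0 → ζ (ε x) x ≠ 0)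
    (U : Set X) (hU : IsOpen U)
    (E : X → ℝ) (hE : ContDiffOn ℝ 2 E U)
    (M : X → Xt)
    (hgrad : ∀ x ∈ U, ∀ v : X, fderiv ℝ E x v = ζ (M x) v)
    (x_inf : X) (hx : x_inf ∈ U) (hMcrit : M x_inf = 0)
    (hFred : FredholmIndexZero (fderiv ℝ M x_inf))
    -- additional hypothesis: M is real analytic
    (hMan : AnalyticOnNhd ℝ M U)
    -- K = ker M'(x_inf); Π : X* → X* a continuous projection with range j(K),
    -- inducing Pt : X̃ → X.
    (Pd : StrongDual ℝ X →L[ℝ] StrongDual ℝ X)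
    (hPd_idem : Pd.comp Pd = Pd)
    (hPd_range : LinearMap.range (Pd : StrongDual ℝ X →ₗ[ℝ] StrongDual ℝ X)
      = Submodule.map ((ζ.comp ε : X →L[ℝ] StrongDual ℝ X) : X →ₗ[ℝ] StrongDual ℝ X) (LinearMap.ker (fderiv ℝ M x_inf : X →ₗ[ℝ] Xt)))
    (Pt : Xt →L[ℝ] X)
    (hPt_mem : ∀ y : Xt, Pt y ∈ LinearMap.ker (fderiv ℝ M x_inf : X →ₗ[ℝ] Xt))
    (hPt_compat : ∀ y : Xt, ζ (ε (Pt y)) = Pd (ζ y)) :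
    ∃ (U₀ : Set X) (V₀ : Set Xt) (Ψ : Xt → X),
      IsOpen U₀ ∧ x_inf ∈ U₀ ∧ U₀ ⊆ U ∧ IsOpen V₀ ∧ (0 : Xt) ∈ V₀ ∧
      MapsTo Ψ V₀ U₀ ∧
      (∀ α ∈ V₀, M (Ψ α) + ε (Pt (ε (Ψ α - x_inf))) = α) ∧
      (∀ x ∈ U₀, Ψ (M x + ε (Pt (ε (x - x_inf)))) = x) ∧
      AnalyticOnNhd ℝ Ψ V₀ ∧
      AnalyticOnNhd ℝ
        (fun k : LinearMap.ker (fderiv ℝ M x_inf : X →ₗ[ℝ] Xt) => E (Ψ (ε (k : X))))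
        {k : LinearMap.ker (fderiv ℝ M x_inf : X →ₗ[ℝ] Xt) | ε (k : X) ∈ V₀} := by
  set A := fderiv ℝ M x_inf
  set Q : X →L[ℝ] Xt := ε.comp (Pt.comp ε)
  have hM : HasFDerivAt M A x_inf := (hMan x_inf hx).differentiableAt.hasFDerivAt
  have hEM : ∀ z ∈ U, HasFDerivAt E (ζ (M z)) z := fun z hz =>
    ContinuousLinearMap.ext (hgrad z hz) ▸
      ((hE.differentiableOn (by norm_num)).differentiableAt (hU.mem_nhds hz)).hasFDerivAt
  have hsymm : ∀ u v, ζ (A u) v = ζ (A v) u :=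
    gradient_map_fderiv_symm ζ (hE.contDiffAt (hU.mem_nhds hx))
      (eventually_of_mem (hU.mem_nhds hx) fun z hz => (hEM z hz).fderiv) hM
  have hP_id : ∀ k ∈ LinearMap.ker (A : X →ₗ[ℝ] Xt), Pt (ε k) = k := fun k hk =>
    induced_projection_apply_of_mem ε ζ ((ζ.comp ε).injective_of_apply_self_ne_zero hdef)
      hPd_idem hPd_range hPt_compat hk
  have hL := bijective_add_comp_projection hFred hsymm hdef hPt_mem hP_id
  set L := ContinuousLinearEquiv.ofBijective (A + Q) (LinearMap.ker_eq_bot.2 hL.1)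
    (LinearMap.range_eq_top.2 hL.2)
  set Φ : X → Xt := fun x => M x + Q (x - x_inf)
  have hΦ : HasFDerivAt Φ (L : X →L[ℝ] Xt) x_inf :=
    hM.add (Q.hasFDerivAt.comp x_inf ((hasFDerivAt_id x_inf).sub_const x_inf))
  have hΦan : AnalyticAt ℝ Φ x_inf :=
    (hMan x_inf hx).add ((Q.analyticAt _).comp (analyticAt_id.sub analyticAt_const))
  obtain ⟨e, heΦ, hxe, hsrc, hΨ⟩ :=
    hΦan.exists_openPartialHomeomorph_analyticOnNhd_symm hΦ (hU.mem_nhds hx)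
  have he (x : X) : e x = M x + ε (Pt (ε (x - x_inf))) := congrFun heΦ x
  have hEan : AnalyticOnNhd ℝ E U :=
    analyticOnNhd_of_hasFDerivAt hU hEM fun z hz => (ζ.analyticAt _).comp (hMan z hz)
  have he_inf : e x_inf = 0 := by simp [he, hMcrit]
  refine ⟨e.source, e.target, e.symm, e.open_source, hxe, hsrc, e.open_target,
    he_inf ▸ e.map_source hxe, e.mapsTo_symm, fun α hα => (he _).symm.trans (e.right_inv hα),
    fun x hx => he x ▸ e.left_inv hx, hΨ, fun k hk => ?_⟩
  set ι := ε.comp (LinearMap.ker (A : X →ₗ[ℝ] Xt)).subtypeL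
  exact (hEan.comp hΨ (fun α hα => hsrc (e.map_target hα)) _ hk).comp (f := ι) (ι.analyticAt k)

/-- Analyticity of the Lyapunov–Schmidt reduction (Setting (B), `M` real analytic):
the local inverse `Ψ` of `Φ x = M x + Π (x - x_inf)` is real analytic, and in particular
the Lyapunov–Schmidt reduction `Γ (α) = E (Ψ α)` is real analytic on `K ∩ V₀`. -/
theorem analyticity_lyapunov_schmidt_reduction
    {X Xt : Type*} [NormedAddCommGroup X] [NormedSpace ℝ X] [CompleteSpace X]
    [NormedAddCommGroup Xt] [NormedSpace ℝ Xt] [CompleteSpace Xt]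
    -- Setting (B)
    (ε : X →L[ℝ] Xt) (hε : Function.Injective ε)
    (ζ : Xt →L[ℝ] StrongDual ℝ X) (hζ : Function.Injective ζ)
    (hdef : ∀ x : X, x ≠ 0 → ζ (ε x) x ≠ 0)
    (U : Set X) (hU : IsOpen U)
    (E : X → ℝ) (hE : ContDiffOn ℝ 2 E U)
    (M : X → Xt) (hMC1 : ContDiffOn ℝ 1 M U)
    (hgrad : ∀ x ∈ U, ∀ v : X, fderiv ℝ E x v = ζ (M x) v)
    (x_inf : X) (hx : x_inf ∈ U) (hMcrit : M x_inf = 0)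
    (hFred : FredholmIndexZero (fderiv ℝ M x_inf))
    -- additional hypothesis: M is real analytic
    (hMan : AnalyticOnNhd ℝ M U)
    -- K = ker M'(x_inf); Π : X* → X* a continuous projection with range j(K),
    -- inducing Pt : X̃ → X.
    (Pd : StrongDual ℝ X →L[ℝ] StrongDual ℝ X)
    (hPd_idem : Pd.comp Pd = Pd)
    (hPd_range : LinearMap.range (Pd : StrongDual ℝ X →ₗ[ℝ] StrongDual ℝ X)
      = Submodule.map ((ζ.comp ε : X →L[ℝ] StrongDual ℝ X) : X →ₗ[ℝ] StrongDual ℝ X) (LinearMap.ker (fderiv ℝ M x_inf : X →ₗ[ℝ] Xt)))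
    (Pt : Xt →L[ℝ] X)
    (hPt_mem : ∀ y : Xt, Pt y ∈ LinearMap.ker (fderiv ℝ M x_inf : X →ₗ[ℝ] Xt))
    (hPt_compat : ∀ y : Xt, ζ (ε (Pt y)) = Pd (ζ y)) :
    ∃ (U₀ : Set X) (V₀ : Set Xt) (Ψ : Xt → X),
      IsOpen U₀ ∧ x_inf ∈ U₀ ∧ U₀ ⊆ U ∧ IsOpen V₀ ∧ (0 : Xt) ∈ V₀ ∧
      MapsTo Ψ V₀ U₀ ∧
      (∀ α ∈ V₀, M (Ψ α) + ε (Pt (ε (Ψ α - x_inf))) = α) ∧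
      (∀ x ∈ U₀, Ψ (M x + ε (Pt (ε (x - x_inf)))) = x) ∧
      AnalyticOnNhd ℝ Ψ V₀ ∧
      AnalyticOnNhd ℝ
        (fun k : LinearMap.ker (fderiv ℝ M x_inf : X →ₗ[ℝ] Xt) => E (Ψ (ε (k : X))))
        {k : LinearMap.ker (fderiv ℝ M x_inf : X →ₗ[ℝ] Xt) | ε (k : X) ∈ V₀} :=
  analyticity_lyapunov_schmidt_reduction_general ε ζ hdef U hU E hE M hgrad x_inf hx hMcrit hFred
    hMan Pd hPd_idem hPd_range Pt hPt_mem hPt_compat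
end
end
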